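/- PageRank equivalence (homogeneous case): Let W be column-stochastic, β ∈ (0,1), and let P^T and Q^T be the unique solutions of P^T = β P^T W + (1−β)W and Q^T = β P^T + (1−β)I. Define Ψ̃ = (1/N)·Q^T·e where e is the all-ones vector. Then Ψ̃ satisfies the PageRank equation Ψ̃ = β W Ψ̃ + (1−β)·e/N; hence Ψ̃ equals the PageRank vector with damping factor β. -/
import Mathlib


open Matrix

/-- PageRank equivalence in the homogeneous case: if `Pᵀ = β Pᵀ W + (1−β) W`
and `Qᵀ = β Pᵀ + (1−β) I` with `W` column-stochastic and `β ∈ (0,1)`, then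
the score vector `Ψ̃ = (1/N) Qᵀ e` satisfies the PageRank equation
`Ψ̃ = β W Ψ̃ + (1−β) e / N`. -/
theorem psi_score_is_pagerank {n : Type*} [Fintype n] [DecidableEq n] [Nonempty n]
    (W : Matrix n n ℝ) (hW : ∀ i j, 0 ≤ W i j) (hcol : ∀ j, ∑ i, W i j = 1)
    (β : ℝ) (hβ : β ∈ Set.Ioo (0 : ℝ) 1)
    (P Q : Matrix n n ℝ)
    (hP : Pᵀ = β • (Pᵀ * W) + (1 - β) • W)
    (hQ : Qᵀ = β • Pᵀ + (1 - β) • (1 : Matrix n n ℝ))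
    (Ψ : n → ℝ)
    (hΨ : Ψ = ((Fintype.card n : ℝ))⁻¹ • Qᵀ.mulVec (fun _ => 1)) :
    Ψ = β • W.mulVec Ψ +
      ((1 - β) * (Fintype.card n : ℝ)⁻¹) • (fun _ => (1 : ℝ)) := by
  obtain ⟨hβ0, hβ1⟩ := hβ
  set M : Matrix n n ℝ := 1 - β • W with hMdef
  -- det (I - βW) ≠ 0 by strict column diagonal dominance
  have hdet : M.det ≠ 0 := by
    apply det_ne_zero_of_sum_col_lt_diag
    intro k
    have hWk1 : W k k ≤ 1 := by
      have := hcol k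
      have h2 : ∑ i ∈ Finset.univ.erase k, W i k ≥ 0 :=
        Finset.sum_nonneg fun i _ => hW i k
      have h3 : W k k + ∑ i ∈ Finset.univ.erase k, W i k = 1 := by
        rw [Finset.add_sum_erase Finset.univ (fun i => W i k) (Finset.mem_univ k)]
        exact hcol k
      linarith
    have hsum : ∑ i ∈ Finset.univ.erase k, ‖M i k‖ = β * (1 - W k k) := by
      have : ∀ i ∈ Finset.univ.erase k, ‖M i k‖ = β * W i k := by
        intro i hi
        have hik : i ≠ k := Finset.ne_of_mem_erase hi
        simp only [hMdef, Matrix.sub_apply, Matrix.one_apply_ne hik, Matrix.smul_apply,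
          smul_eq_mul, zero_sub, Real.norm_eq_abs, abs_neg, abs_mul,
          abs_of_pos hβ0, abs_of_nonneg (hW i k)]
      rw [Finset.sum_congr rfl this, ← Finset.mul_sum]
      have h3 : W k k + ∑ i ∈ Finset.univ.erase k, W i k = 1 := by
        rw [Finset.add_sum_erase Finset.univ (fun i => W i k) (Finset.mem_univ k)]
        exact hcol k
      have : ∑ i ∈ Finset.univ.erase k, W i k = 1 - W k k := by linarith
      rw [this]
    have hdiag : ‖M k k‖ = 1 - β * W k k := by
      have hnn : (0:ℝ) ≤ 1 - β * W k k := by nlinarith [hW k k]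
      simp [hMdef, Matrix.sub_apply, Matrix.one_apply_eq, Matrix.smul_apply,
        abs_of_nonneg hnn]
    rw [hsum, hdiag]
    nlinarith [hW k k]
  have hdetUnit : IsUnit M.det := isUnit_iff_ne_zero.2 hdet
  -- M commutes with W
  have hMW : M * W = W * M := by
    simp only [hMdef, Matrix.sub_mul, Matrix.mul_sub, Matrix.one_mul, Matrix.mul_one,
      Matrix.smul_mul, Matrix.mul_smul]
  -- Pᵀ * M = (1-β) • W
  have hPM : Pᵀ * M = (1 - β) • W := by
    rw [hMdef, Matrix.mul_sub, Matrix.mul_one, Matrix.mul_smul]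
    nth_rewrite 1 [hP]
    module
  -- W commutes with Pᵀ
  have hcomm : W * Pᵀ = Pᵀ * W := by
    have h1 : (W * Pᵀ) * M = (Pᵀ * W) * M := by
      calc (W * Pᵀ) * M = W * (Pᵀ * M) := Matrix.mul_assoc _ _ _
      _ = W * ((1 - β) • W) := by rw [hPM]
      _ = ((1 - β) • W) * W := by rw [Matrix.mul_smul, Matrix.smul_mul]
      _ = (Pᵀ * M) * W := by rw [hPM]
      _ = Pᵀ * (M * W) := Matrix.mul_assoc _ _ _
      _ = Pᵀ * (W * M) := by rw [hMW]
      _ = (Pᵀ * W) * M := (Matrix.mul_assoc _ _ _).symm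
    calc W * Pᵀ = (W * Pᵀ) * M * M⁻¹ := (Matrix.mul_nonsing_inv_cancel_right _ _ hdetUnit).symm
    _ = (Pᵀ * W) * M * M⁻¹ := by rw [h1]
    _ = Pᵀ * W := Matrix.mul_nonsing_inv_cancel_right _ _ hdetUnit
  have hP' : Pᵀ = β • (W * Pᵀ) + (1 - β) • W := by rw [hcomm]; exact hP
  set e : n → ℝ := fun _ => (1:ℝ) with he
  set v : n → ℝ := Pᵀ.mulVec e with hv
  have hvkey : v = β • W.mulVec v + (1 - β) • W.mulVec e := by
    conv_lhs => rw [hv, hP']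
    simp [Matrix.add_mulVec, Matrix.smul_mulVec, hv, ← Matrix.mulVec_mulVec]
  have hΨ' : Ψ = ((Fintype.card n : ℝ))⁻¹ • (β • v + (1 - β) • e) := by
    rw [hΨ, hQ]
    simp [Matrix.add_mulVec, Matrix.smul_mulVec, Matrix.one_mulVec, hv]
  rw [hΨ']
  have hWmul : W.mulVec (((Fintype.card n : ℝ))⁻¹ • (β • v + (1 - β) • e))
      = ((Fintype.card n : ℝ))⁻¹ • (β • W.mulVec v + (1 - β) • W.mulVec e) := by
    rw [Matrix.mulVec_smul]
    congr 1
    simp [Matrix.mulVec_add, Matrix.mulVec_smul]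
  rw [hWmul]
  conv_lhs => rw [hvkey]
  module
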